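/- For every h ∈ Im(A), the functional x ↦ ⟨h, A x⟩ belongs to the annihilator of the kernel of A, and the resulting linear map Ã : Im(A) → N⊥(A) is a Banach space isomorphism (continuous linear bijection with continuous inverse). -/

import Mathlib

/-!
`Ã` is injective because `⟪A x, A x⟫ = 0` forces `A x = 0`. For surjectivity, a functional `f`
vanishing on `ker A` factors algebraically through the corestriction `X → Im(A)`; by the open
mapping theorem this corestriction is a quotient map, so the factor is continuous, and the Riesz
representation theorem on the Hilbert space `Im(A)` (closed, hence complete) writes it as
`⟪h, ·⟫`. The inverse of `Ã` is continuous by the open mapping theorem once more.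
-/

open RealInnerProductSpace

/-- The conullspace `N⊥(A)`: the annihilator in `X*` of the kernel of `A`. -/
noncomputable def conull {X H : Type*} [NormedAddCommGroup X] [NormedSpace ℝ X]
    [NormedAddCommGroup H] [InnerProductSpace ℝ H] (A : X →L[ℝ] H) :
    Submodule ℝ (X →L[ℝ] ℝ) where
  carrier := {f | ∀ x, A x = 0 → f x = 0}
  add_mem' := fun hf hg x hx => by simp [hf x hx, hg x hx]
  zero_mem' := fun x _ => rfl
  smul_mem' := fun c f hf x hx => by simp [hf x hx]

open Function

theorem ContinuousLinearMap.exists_comp_eq_of_surjective_of_ker_le {𝕜 E F G : Type*}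
    [NontriviallyNormedField 𝕜] [NormedAddCommGroup E] [NormedSpace 𝕜 E] [CompleteSpace E]
    [NormedAddCommGroup F] [NormedSpace 𝕜 F] [CompleteSpace F]
    [AddCommGroup G] [Module 𝕜 G] [TopologicalSpace G]
    {A : E →L[𝕜] F} (hA : Surjective A) {f : E →L[𝕜] G} (hker : A.ker ≤ f.ker) :
    ∃ g : F →L[𝕜] G, g ∘L A = f := by
  let g : F →ₗ[𝕜] G :=
    (A.ker.liftQ f hker).comp ((A : E →ₗ[𝕜] F).quotKerEquivOfSurjective hA).symm.toLinearMap
  have hgA : ∀ x, g (A x) = f x := fun x => by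
    simp only [g, LinearMap.coe_comp, LinearEquiv.coe_coe]
    exact congrArg _ ((A : E →ₗ[𝕜] F).quotKerEquivOfSurjective_symm_apply hA x)
  have hg : Continuous g := by
    rw [(A.isQuotientMap hA).continuous_iff]
    exact (funext hgA : g ∘ A = f) ▸ f.continuous
  exact ⟨⟨g, hg⟩, ContinuousLinearMap.ext hgA⟩

section

variable {X H : Type*} [NormedAddCommGroup X] [NormedSpace ℝ X]
    [NormedAddCommGroup H] [InnerProductSpace ℝ H] (A : X →L[ℝ] H)

theorem isClosed_conull : IsClosed (conull A : Set (X →L[ℝ] ℝ)) := by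
  show IsClosed {f : X →L[ℝ] ℝ | ∀ x, A x = 0 → f x = 0}
  simp only [Set.ofPred_forall]
  exact isClosed_iInter fun x => isClosed_iInter fun _ =>
    isClosed_eq (continuous_eval_const x) continuous_const

instance : CompleteSpace (conull A) := (isClosed_conull A).completeSpace_coe

theorem innerSL_comp_mem_conull (h : H) : (innerSL ℝ h).comp A ∈ conull A := by
  intro x hx
  simp [hx]

noncomputable def atilde : LinearMap.range (A : X →ₗ[ℝ] H) →L[ℝ] conull A :=
  ((ContinuousLinearMap.compL ℝ X H ℝ).flip A ∘L innerSL ℝ ∘L (LinearMap.range _).subtypeL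
    ).codRestrict (conull A) fun h => innerSL_comp_mem_conull A h

theorem atilde_injective : Injective (atilde A) := by
  refine (injective_iff_map_eq_zero _).2 fun ⟨_, x, rfl⟩ hx => ?_
  have : ⟪A x, A x⟫ = 0 := congrArg (fun f : conull A => (f : X →L[ℝ] ℝ) x) hx
  exact Subtype.ext (inner_self_eq_zero.1 this)

theorem atilde_surjective [CompleteSpace X] [CompleteSpace (LinearMap.range (A : X →ₗ[ℝ] H))] :
    Surjective (atilde A) := by
  rintro ⟨f, hf⟩
  obtain ⟨g, hg⟩ := ContinuousLinearMap.exists_comp_eq_of_surjective_of_ker_le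
    (A := A.rangeRestrict) (LinearMap.surjective_rangeRestrict _)
    (f := f) fun x hx => hf x (congrArg Subtype.val hx)
  refine ⟨(InnerProductSpace.toDual ℝ _).symm g, Subtype.ext (ContinuousLinearMap.ext fun x => ?_)⟩
  exact InnerProductSpace.toDual_symm_apply.trans (DFunLike.congr_fun hg x)

noncomputable def atildeEquiv [CompleteSpace X] [CompleteSpace (LinearMap.range (A : X →ₗ[ℝ] H))] :
    LinearMap.range (A : X →ₗ[ℝ] H) ≃L[ℝ] conull A :=
  .ofBijective (σ := RingHom.id ℝ) (σ' := RingHom.id ℝ) (E := LinearMap.range (A : X →ₗ[ℝ] H))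
    (F := conull A) (atilde A) (LinearMap.ker_eq_bot.2 (atilde_injective A))
    (LinearMap.range_eq_top.2 (atilde_surjective A))

end

/-- For every `h ∈ Im(A)` the functional `x ↦ ⟪h, A x⟫` belongs to the
annihilator of the kernel of `A`, and the resulting map `Ã : Im(A) → N⊥(A)` is a Banach
space isomorphism (a continuous linear bijection with continuous inverse). -/
theorem atilde_isomorphism {X H : Type*} [NormedAddCommGroup X] [NormedSpace ℝ X]
    [CompleteSpace X] [NormedAddCommGroup H] [InnerProductSpace ℝ H] [CompleteSpace H]
    (A : X →L[ℝ] H) (hclosed : IsClosed (Set.range A)) :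
    (∀ h ∈ LinearMap.range (A : X →ₗ[ℝ] H), (innerSL ℝ h).comp A ∈ conull A) ∧
      ∃ e : (LinearMap.range (A : X →ₗ[ℝ] H)) ≃L[ℝ] (conull A),
        ∀ h : LinearMap.range (A : X →ₗ[ℝ] H), (e h : X →L[ℝ] ℝ) = (innerSL ℝ (h : H)).comp A := by
  have hclosed' : IsClosed (LinearMap.range (A : X →ₗ[ℝ] H) : Set H) := by
    rwa [LinearMap.coe_range, ContinuousLinearMap.coe_coe]
  have : CompleteSpace (LinearMap.range (A : X →ₗ[ℝ] H)) := hclosed'.completeSpace_coe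
  exact ⟨fun h _ => innerSL_comp_mem_conull A h, atildeEquiv A, fun _ => rfl⟩
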